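/- Let p be a prime with p^m ≡ 2 (mod 3), let δ̃ = δ̃_0 + uδ̃_1 + u²δ̃_2 ∈ R³ be a unit with δ̃_1 ≠ 0, and let δ̃_{0,0} be the unique element of F with δ̃_{0,0}^{p^s} = δ̃_0. Then for each 0 ≤ i ≤ 3p^s − 1, the ideal ⟨(x² + δ̃_{0,0}x + δ̃_{0,0}²)^i⟩ of T = R³[x]/⟨x^{2p^s} + δ̃x^{p^s} + δ̃²⟩ has exactly (p^{2m})^{3p^s − i} elements. -/

import Mathlib

open Polynomial

/-- The finite chain ring `R^t = 𝔽_{p^m}[u]/⟨u^t⟩`. -/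
abbrev Rt (p m t : ℕ) [Fact p.Prime] : Type _ :=
  Polynomial (GaloisField p m) ⧸ Ideal.span {(X : Polynomial (GaloisField p m)) ^ t}

noncomputable instance (p m t : ℕ) [Fact p.Prime] : CommRing (Rt p m t) :=
  Ideal.Quotient.commRing _

/-- The canonical projection `𝔽_{p^m}[u] → R^t`. -/
noncomputable def mkRt (p m t : ℕ) [Fact p.Prime] :
    Polynomial (GaloisField p m) →+* Rt p m t :=
  Ideal.Quotient.mk _

/-- The element `u ∈ R^t`. -/
noncomputable def uRt (p m t : ℕ) [Fact p.Prime] : Rt p m t := mkRt p m t X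

/-- The canonical embedding `𝔽_{p^m} → R^t`. -/
noncomputable def κ (p m t : ℕ) [Fact p.Prime] : GaloisField p m →+* Rt p m t :=
  (mkRt p m t).comp (C : GaloisField p m →+* Polynomial (GaloisField p m))

/-- The quotient ring `R^t[x]/⟨x^N − δ⟩`. -/
abbrev Qr (p m t : ℕ) [Fact p.Prime] (N : ℕ) (δ : Rt p m t) : Type _ :=
  Polynomial (Rt p m t) ⧸ Ideal.span {(X : Polynomial (Rt p m t)) ^ N - C δ}

/-- The canonical projection `R^t[x] → R^t[x]/⟨x^N − δ⟩`. -/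
noncomputable def mkQr (p m t : ℕ) [Fact p.Prime] (N : ℕ) (δ : Rt p m t) :
    Polynomial (Rt p m t) →+* Qr p m t N δ :=
  Ideal.Quotient.mk _

/-! Write `N = p ^ s`, `q = p ^ m`, `b = δ̃_{0,0}` and `g = x² + b x + b²`. By Frobenius
`g ^ N = x ^ 2N + b ^ N x ^ N + b ^ 2N`, so subtracting the defining relation of `T` gives
`g ^ N = (b ^ N - δ̃) (x ^ N + b ^ N + δ̃)`. The second factor is a unit, since
`(x ^ N + b ^ N + δ̃) (x ^ N - b ^ N) = -(b ^ 2N + b ^ N δ̃ + δ̃ ²) ≡ -3 b ^ 2N (mod u)` and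
`p ≠ 3`; the first is `-u (δ̃₁ + u δ̃₂)`, `u` times a unit. So `g ^ N` is `u` times a unit:
`g ^ 3N = 0`, and `u ∈ ⟨g⟩`, whence `T / ⟨g⟩` is spanned over `𝔽` by `1, x` and
`|⟨g ^ i⟩| ≤ q² |⟨g ^ (i + 1)⟩|`. As `|T| = q ^ 6N`, all these inequalities along the chain
`T = ⟨g ^ 0⟩ ⊇ ⋯ ⊇ ⟨g ^ 3N⟩ = 0` are equalities. -/

theorem Nat.eq_pow_sub_of_le_mul_succ {P M : ℕ} {n : ℕ → ℕ} (hP : 0 < P) (h0 : n 0 = P ^ M)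
    (hM : n M ≤ 1) (hstep : ∀ i, n i ≤ P * n (i + 1)) {i : ℕ} (hi : i ≤ M) :
    n i = P ^ (M - i) := by
  have hchain : ∀ i k, n i ≤ P ^ k * n (i + k) := by
    intro i k
    induction k with
    | zero => simp
    | succ k ih =>
      calc n i ≤ P ^ k * n (i + k) := ih
        _ ≤ P ^ k * (P * n (i + k + 1)) := Nat.mul_le_mul_left _ (hstep _)
        _ = P ^ (k + 1) * n (i + (k + 1)) := by rw [← add_assoc]; ring
  have hupper : n i ≤ P ^ (M - i) :=
    calc n i ≤ P ^ (M - i) * n (i + (M - i)) := hchain i (M - i)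
      _ ≤ P ^ (M - i) := by
        rw [Nat.add_sub_cancel' hi]; exact mul_le_of_le_one_right (Nat.zero_le _) hM
  have hlower : P ^ i * P ^ (M - i) ≤ P ^ i * n i := by
    rw [← pow_add, Nat.add_sub_cancel' hi, ← h0]
    simpa using hchain 0 i
  exact le_antisymm hupper (Nat.le_of_mul_le_mul_left hlower (pow_pos hP i))

namespace Ideal

variable {T : Type*} [CommRing T] [Finite T]

theorem natCard_span_singleton_pow_le (g : T) (i : ℕ) :
    Nat.card (span {g ^ i}) ≤ Nat.card (T ⧸ span {g}) * Nat.card (span {g ^ (i + 1)}) := by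
  have hmk := Quotient.mk_surjective (I := span {g})
  have hmem (c : T ⧸ span {g}) (y : span {g ^ (i + 1)}) :
      Function.surjInv hmk c * g ^ i + y ∈ span {g ^ i} :=
    add_mem (mul_mem_left _ _ (subset_span rfl))
      (span_singleton_le_span_singleton.2 (pow_dvd_pow g i.le_succ) y.2)
  have hsurj : Function.Surjective fun cy : (T ⧸ span {g}) × span {g ^ (i + 1)} =>
      (⟨_, hmem cy.1 cy.2⟩ : span {g ^ i}) := by
    rintro ⟨x, hx⟩
    obtain ⟨a, rfl⟩ := mem_span_singleton'.1 hx
    obtain ⟨z, hz⟩ := mem_span_singleton'.1 <| Quotient.eq.1 <|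
      Function.surjInv_eq hmk (Quotient.mk _ a)
    refine ⟨⟨Quotient.mk _ a, -z * g ^ (i + 1), mul_mem_left _ _ (subset_span rfl)⟩, ?_⟩
    ext
    simp only
    linear_combination -(g ^ i) * hz
  have : Finite (T ⧸ span {g}) := Finite.of_surjective _ hmk
  simpa using Nat.card_le_card_of_surjective _ hsurj

theorem natCard_span_singleton_pow_of_pow_eq_zero {g : T} {n P : ℕ} (hg : g ^ n = 0)
    (hT : Nat.card T = P ^ n) (hQ : Nat.card (T ⧸ span {g}) ≤ P) {i : ℕ} (hi : i ≤ n) :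
    Nat.card (span {g ^ i}) = P ^ (n - i) := by
  have : Finite (T ⧸ span {g}) := Finite.of_surjective _ Quotient.mk_surjective
  refine Nat.eq_pow_sub_of_le_mul_succ (n := fun j => Nat.card (span {g ^ j}))
    (Nat.card_pos.trans_le hQ) ?_ ?_ ?_ hi
  · rw [pow_zero, span_singleton_one, ← hT]
    exact Nat.card_congr Submodule.topEquiv.toEquiv
  · simp [hg]
  · exact fun j => (natCard_span_singleton_pow_le g j).trans (Nat.mul_le_mul_right _ hQ)

end Ideal

theorem AdjoinRoot.natCard_of_monic {R : Type*} [CommRing R] {f : R[X]} (hf : f.Monic) :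
    Nat.card (AdjoinRoot f) = Nat.card R ^ f.natDegree := by
  rw [Nat.card_congr (AdjoinRoot.powerBasis' hf).basis.equivFun.toEquiv, Nat.card_fun]
  simp

section

variable {S : Type*} [CommRing S]

theorem isUnit_add_add_of_sq_add_mul_add_sq_eq_zero {z c δ : S}
    (hz : z ^ 2 + δ * z + δ ^ 2 = 0) (hc : IsUnit (c ^ 2 + c * δ + δ ^ 2)) :
    IsUnit (z + c + δ) := by
  -- `(z + c + δ) * (z - c) = -(c ^ 2 + c * δ + δ ^ 2)`
  obtain ⟨e, he⟩ := hc.exists_right_inv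
  refine IsUnit.of_mul_eq_one (-(z - c) * e) ?_
  linear_combination (-e) * hz + he

theorem isUnit_sq_add_mul_add_sq {c δ : S} (hc : IsUnit (3 * c ^ 2)) (hδ : IsNilpotent (δ - c)) :
    IsUnit (c ^ 2 + c * δ + δ ^ 2) := by
  -- `c ^ 2 + c * δ + δ ^ 2 = 3 * c ^ 2 + (δ - c) * (δ + 2 * c)`
  have h := ((Commute.all _ _).isNilpotent_mul_right hδ (y := δ + 2 * c)).isUnit_add_left_of_commute
    hc (Commute.all _ _)
  convert h using 1
  ring

theorem sq_add_mul_add_sq_pow_expChar_pow (p s : ℕ) [ExpChar S p] (y a : S) :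
    (y ^ 2 + a * y + a ^ 2) ^ p ^ s =
      (y ^ p ^ s) ^ 2 + a ^ p ^ s * y ^ p ^ s + (a ^ p ^ s) ^ 2 := by
  simp only [add_pow_expChar_pow, mul_pow, ← pow_mul, mul_comm 2]

end

theorem AdjoinRoot.exists_isUnit_mk_pow_eq {R : Type*} [CommRing R] (p s : ℕ) [ExpChar R p]
    {a δ : R} (h : IsUnit ((a ^ p ^ s) ^ 2 + a ^ p ^ s * δ + δ ^ 2)) :
    ∃ v, IsUnit v ∧
      mk (X ^ (2 * p ^ s) + C δ * X ^ p ^ s + C (δ ^ 2)) (X ^ 2 + C a * X + C (a ^ 2)) ^ p ^ s =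
      of (X ^ (2 * p ^ s) + C δ * X ^ p ^ s + C (δ ^ 2)) (a ^ p ^ s - δ) * v := by
  set f : R[X] := X ^ (2 * p ^ s) + C δ * X ^ p ^ s + C (δ ^ 2)
  have hroot : (root f ^ p ^ s) ^ 2 + of f δ * root f ^ p ^ s + of f δ ^ 2 = 0 := by
    simpa [f, ← pow_mul, mul_comm 2] using mk_self (f := f)
  have hfrob := congrArg (mk f) (sq_add_mul_add_sq_pow_expChar_pow p s X (C a))
  refine ⟨root f ^ p ^ s + of f (a ^ p ^ s) + of f δ,
    isUnit_add_add_of_sq_add_mul_add_sq_eq_zero hroot (by simpa using h.map (of f)), ?_⟩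
  simp only [map_pow, map_add, map_mul, mk_X, mk_C] at hfrob
  simp only [map_pow, map_add, map_mul, map_sub, mk_X, mk_C, hfrob]
  linear_combination hroot

theorem Polynomial.degree_C_mul_X_pow_add_C_lt {R : Type*} [Semiring R] [Nontrivial R] {N : ℕ}
    (hN : N ≠ 0) (a c : R) : (C a * X ^ N + C c).degree < (X ^ (2 * N) : R[X]).degree := by
  refine degree_lt_degree ((natDegree_add_le _ _).trans_lt ?_)
  rw [natDegree_X_pow, natDegree_C, max_lt_iff]
  exact ⟨(natDegree_C_mul_X_pow_le _ _).trans_lt (by omega), by omega⟩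

namespace Rt

variable (p m t : ℕ) [Fact p.Prime]

instance : Finite (Rt p m t) :=
  have : Module.Finite (GaloisField p m) (Rt p m t) := (monic_X_pow t).finite_quotient
  Module.finite_of_finite (GaloisField p m)

theorem natCard : Nat.card (Rt p m t) = Nat.card (GaloisField p m) ^ t := by
  have h := AdjoinRoot.natCard_of_monic (monic_X_pow (R := GaloisField p m) t)
  rwa [natDegree_X_pow] at h

theorem uRt_pow : uRt p m t ^ t = 0 := by
  rw [uRt, ← map_pow, mkRt, Ideal.Quotient.eq_zero_iff_mem]
  exact Ideal.subset_span rfl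

theorem nontrivial (ht : t ≠ 0) : Nontrivial (Rt p m t) :=
  Ideal.Quotient.nontrivial_iff.2 <| by
    rw [Ne, Ideal.span_singleton_eq_top, isUnit_pow_iff ht]
    exact not_isUnit_X

theorem charP (ht : t ≠ 0) : CharP (Rt p m t) p :=
  have := nontrivial p m t ht
  charP_of_injective_ringHom (κ p m t).injective p

theorem exists_eq_κ_add_uRt_mul (r : Rt p m t) : ∃ c r', r = κ p m t c + uRt p m t * r' := by
  obtain ⟨q, rfl⟩ := Ideal.Quotient.mk_surjective r
  obtain ⟨q', hq'⟩ := X_dvd_sub_C (p := q)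
  exact ⟨q.coeff 0, mkRt p m t q', by
    rw [κ, uRt, RingHom.comp_apply, ← map_mul, ← hq', map_sub, add_sub_cancel]; rfl⟩

theorem isUnit_κ_add_uRt_mul {c : GaloisField p m} (hc : c ≠ 0) (r : Rt p m t) :
    IsUnit (κ p m t c + uRt p m t * r) :=
  ((Commute.all _ _).isNilpotent_mul_right ⟨t, uRt_pow p m t⟩).isUnit_add_left_of_commute
    (hc.isUnit.map _) (Commute.all _ _)

variable {p m t}

theorem natCard_quotient_span_le {f : (Rt p m t)[X]} (b : GaloisField p m)
    (hu : AdjoinRoot.of f (uRt p m t) ∈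
      Ideal.span {AdjoinRoot.mk f (X ^ 2 + C (κ p m t b) * X + C (κ p m t b ^ 2))}) :
    Nat.card (AdjoinRoot f ⧸
        Ideal.span {AdjoinRoot.mk f (X ^ 2 + C (κ p m t b) * X + C (κ p m t b ^ 2))}) ≤
      Nat.card (GaloisField p m) ^ 2 := by
  set ψ := (Ideal.Quotient.mk (Ideal.span
    {AdjoinRoot.mk f (X ^ 2 + C (κ p m t b) * X + C (κ p m t b ^ 2))})).comp (AdjoinRoot.mk f)
  have hψu : ψ (C (uRt p m t)) = 0 := Ideal.Quotient.eq_zero_iff_mem.2 hu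
  have hψg : ψ (X ^ 2 + C (κ p m t b) * X + C (κ p m t b ^ 2)) = 0 :=
    Ideal.Quotient.eq_zero_iff_mem.2 (Ideal.subset_span rfl)
  have hlinear (q : (Rt p m t)[X]) : ∃ a c, ψ q = ψ (C (κ p m t a) * X + C (κ p m t c)) := by
    induction q using Polynomial.induction_on with
    | C r =>
      obtain ⟨c, r', rfl⟩ := exists_eq_κ_add_uRt_mul p m t r
      exact ⟨0, c, by simp [hψu]⟩
    | add q₁ q₂ h₁ h₂ =>
      obtain ⟨a₁, c₁, h₁⟩ := h₁
      obtain ⟨a₂, c₂, h₂⟩ := h₂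
      refine ⟨a₁ + a₂, c₁ + c₂, ?_⟩
      simp only [map_add, map_mul] at h₁ h₂ ⊢
      linear_combination h₁ + h₂
    | monomial n r h =>
      obtain ⟨a, c, h⟩ := h
      refine ⟨c - a * b, -(a * b ^ 2), ?_⟩
      simp only [map_add, map_mul, map_pow, map_sub, map_neg] at h hψg ⊢
      linear_combination ψ X * h + ψ (C (κ p m t a)) * hψg
  have hsurj : Function.Surjective
      fun ac : GaloisField p m × GaloisField p m =>
        ψ (C (κ p m t ac.1) * X + C (κ p m t ac.2)) := by
    intro y
    obtain ⟨q, rfl⟩ := (Ideal.Quotient.mk_surjective.comp AdjoinRoot.mk_surjective) y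
    obtain ⟨a, c, h⟩ := hlinear q
    exact ⟨(a, c), h.symm⟩
  calc _ ≤ Nat.card (GaloisField p m × GaloisField p m) := Nat.card_le_card_of_surjective _ hsurj
    _ = Nat.card (GaloisField p m) ^ 2 := by rw [Nat.card_prod, sq]

theorem natCard_span_pow (ht : t ≠ 0) (s : ℕ) {b : GaloisField p m} (hb : b ≠ 0)
    (h3 : (3 : GaloisField p m) ≠ 0) {w : Rt p m t} (hw : IsUnit w) {δ : Rt p m t}
    (hδ : δ = κ p m t (b ^ p ^ s) + uRt p m t * w) {i : ℕ} (hi : i ≤ t * p ^ s) :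
    Nat.card (Ideal.span {AdjoinRoot.mk (X ^ (2 * p ^ s) + C δ * X ^ p ^ s + C (δ ^ 2))
        (X ^ 2 + C (κ p m t b) * X + C (κ p m t b ^ 2)) ^ i}) =
      (Nat.card (GaloisField p m) ^ 2) ^ (t * p ^ s - i) := by
  have := nontrivial p m t ht
  have := charP p m t ht
  have hN : p ^ s ≠ 0 := pow_ne_zero s (Fact.out : p.Prime).ne_zero
  have hlow := degree_C_mul_X_pow_add_C_lt hN δ (δ ^ 2)
  have hf : (X ^ (2 * p ^ s) + C δ * X ^ p ^ s + C (δ ^ 2)).Monic := by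
    rw [add_assoc]; exact (monic_X_pow _).add_of_left hlow
  have hdeg : (X ^ (2 * p ^ s) + C δ * X ^ p ^ s + C (δ ^ 2)).natDegree = 2 * p ^ s := by
    rw [add_assoc, natDegree_add_eq_left_of_degree_lt hlow, natDegree_X_pow]
  set f : (Rt p m t)[X] := X ^ (2 * p ^ s) + C δ * X ^ p ^ s + C (δ ^ 2)
  set g := AdjoinRoot.mk f (X ^ 2 + C (κ p m t b) * X + C (κ p m t b ^ 2))
  have : Module.Finite (Rt p m t) (AdjoinRoot f) := hf.finite_adjoinRoot
  have := Module.finite_of_finite (Rt p m t) (M := AdjoinRoot f)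
  have hdiff : δ - κ p m t b ^ p ^ s = uRt p m t * w := by rw [hδ, map_pow, add_sub_cancel_left]
  obtain ⟨v, hv, hgN⟩ : ∃ v, IsUnit v ∧ g ^ p ^ s = AdjoinRoot.of f (uRt p m t) * v := by
    have hnil : IsNilpotent (δ - κ p m t b ^ p ^ s) :=
      hdiff ▸ (Commute.all _ _).isNilpotent_mul_right ⟨t, uRt_pow p m t⟩
    have h3c : IsUnit (3 * (κ p m t b ^ p ^ s) ^ 2) := by
      have := (mul_ne_zero h3 (pow_ne_zero 2 (pow_ne_zero (p ^ s) hb))).isUnit.map (κ p m t)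
      simpa only [map_mul, map_pow, map_ofNat] using this
    obtain ⟨v, hv, hgN⟩ :=
      AdjoinRoot.exists_isUnit_mk_pow_eq p s (isUnit_sq_add_mul_add_sq h3c hnil)
    refine ⟨-(AdjoinRoot.of f w * v), ((hw.map _).mul hv).neg, ?_⟩
    rw [hgN, ← neg_sub, hdiff]
    simp only [map_neg, map_mul]
    ring
  refine Ideal.natCard_span_singleton_pow_of_pow_eq_zero ?_ ?_ (natCard_quotient_span_le b ?_) hi
  · rw [pow_mul', hgN, mul_pow, ← map_pow, uRt_pow, map_zero, zero_mul]
  · rw [AdjoinRoot.natCard_of_monic hf, hdeg, natCard, ← pow_mul, ← pow_mul, mul_left_comm]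
  · exact Ideal.mem_span_singleton.2 <| hv.dvd_mul_right.1 <| hgN ▸ dvd_pow_self g hN

end Rt

theorem stmt_19 (p m s : ℕ) [Fact p.Prime]
    (hmod : p ^ m % 3 = 2)
    (δtc : ℕ → GaloisField p m) (hδt0 : δtc 0 ≠ 0) (hδt1 : δtc 1 ≠ 0)
    (δt00 : GaloisField p m) (hδt00 : δt00 ^ p ^ s = δtc 0) :
    ∀ i ≤ 3 * p ^ s - 1,
      Nat.card (Ideal.span {(Ideal.Quotient.mk
          (Ideal.span {(X : Polynomial (Rt p m 3)) ^ (2 * p ^ s) +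
            C (mkRt p m 3 (∑ i ∈ Finset.range 3, C (δtc i) * X ^ i)) * X ^ p ^ s +
            C (mkRt p m 3 (∑ i ∈ Finset.range 3, C (δtc i) * X ^ i) ^ 2)})
          (X ^ 2 + C (κ p m 3 δt00) * X + C (κ p m 3 δt00 ^ 2))) ^ i}) =
        (p ^ (2 * m)) ^ (3 * p ^ s - i) := by
  have hm : m ≠ 0 := by rintro rfl; simp at hmod
  have h3 : (3 : GaloisField p m) ≠ 0 := by
    intro h
    have hp : p = 3 := (Nat.prime_dvd_prime_iff_eq Fact.out Nat.prime_three).1 <|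
      (CharP.cast_eq_zero_iff (GaloisField p m) p 3).1 (by exact_mod_cast h)
    subst hp
    simp [Nat.pow_mod, zero_pow hm] at hmod
  have hb : δt00 ≠ 0 := by
    rintro rfl
    exact hδt0 (by rw [← hδt00, zero_pow (pow_ne_zero s (Fact.out : p.Prime).ne_zero)])
  have hδ : mkRt p m 3 (∑ i ∈ Finset.range 3, C (δtc i) * X ^ i) =
      κ p m 3 (δt00 ^ p ^ s) + uRt p m 3 * (κ p m 3 (δtc 1) + uRt p m 3 * κ p m 3 (δtc 2)) := by
    simp only [Finset.sum_range_succ, Finset.sum_range_zero, pow_zero, pow_one, mul_one,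
      zero_add, map_add, map_mul, map_pow, hδt00]
    simp only [κ, uRt, RingHom.comp_apply]
    ring
  intro i hi
  have h := Rt.natCard_span_pow three_ne_zero s hb h3
    (Rt.isUnit_κ_add_uRt_mul p m 3 hδt1 _) hδ (i := i) (by omega)
  rwa [show p ^ (2 * m) = Nat.card (GaloisField p m) ^ 2 by
    rw [GaloisField.card p m hm, ← pow_mul, mul_comm]]
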